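/- arXiv:2405.11303 — 2 statements merged into one kernel-verified Lean document; each statement's English description precedes it below -/
import Mathlib

section
/- Let f be analytic on the open unit disc 𝔻 with f(0)=0, f'(0)=1 and Re f'(z) > 0 for all z ∈ 𝔻. Then for every z ∈ 𝔻 with |z| = r, Re(1 + z f''(z)/f'(z)) ≤ 1 + 2r/(1−r²). -/
/-!
Let `p = f'`, holomorphic on `𝔻` with positive real part, and `z₀ ∈ 𝔻`. With `φ` the disc
automorphism sending `0` to `z₀` and `C` the Cayley map sending the right half-plane onto `𝔻` and
`p z₀` to `0`, the map `C ∘ p ∘ φ` is a self-map of `𝔻` fixing `0`. The Schwarz lemma bounds its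
derivative at `0` by `1`, which unwinds to the Harnack-type bound
`|p'(z₀)| (1 - |z₀|²) ≤ 2 Re p(z₀)`. Since `Re p ≤ |p|`, this gives
`Re (z p'/p) ≤ |z| |p'|/|p| ≤ 2r/(1 - r²)`.
-/

open Complex Metric Set ComplexConjugate

namespace Complex

noncomputable def discAut (c w : ℂ) : ℂ := (w + c) / (1 + conj c * w)

noncomputable def cayley (a w : ℂ) : ℂ := (w - a) / (w + conj a)

section DiscAut

variable {c : ℂ}

lemma one_add_conj_mul_ne_zero (hc : ‖c‖ < 1) {w : ℂ} (hw : ‖w‖ < 1) : 1 + conj c * w ≠ 0 := by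
  intro h
  have : ‖conj c * w‖ = 1 := by rw [eq_neg_of_add_eq_zero_right h, norm_neg, norm_one]
  rw [norm_mul, norm_conj] at this
  nlinarith [norm_nonneg c, norm_nonneg w]

lemma norm_discAut_lt_one (hc : ‖c‖ < 1) {w : ℂ} (hw : ‖w‖ < 1) : ‖discAut c w‖ < 1 := by
  have hden := one_add_conj_mul_ne_zero hc hw
  rw [discAut, norm_div, div_lt_one (norm_pos_iff.2 hden)]
  apply lt_of_pow_lt_pow_left₀ 2 (norm_nonneg _)
  have hc2 : normSq c < 1 := by rw [normSq_eq_norm_sq]; nlinarith [norm_nonneg c]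
  have hw2 : normSq w < 1 := by rw [normSq_eq_norm_sq]; nlinarith [norm_nonneg w]
  rw [Complex.sq_norm, Complex.sq_norm]
  simp only [normSq_apply, add_re, add_im, mul_re, mul_im, conj_re, conj_im, one_re,
    one_im] at hc2 hw2 ⊢
  -- `|1 + c̄w|² - |w + c|² = (1 - |c|²)(1 - |w|²)`
  nlinarith [mul_pos (sub_pos.2 hc2) (sub_pos.2 hw2)]

lemma mapsTo_discAut (hc : ‖c‖ < 1) : MapsTo (discAut c) (ball 0 1) (ball 0 1) := fun _ hw => by
  rw [mem_ball_zero_iff] at hw ⊢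
  exact norm_discAut_lt_one hc hw

lemma differentiableOn_discAut (hc : ‖c‖ < 1) : DifferentiableOn ℂ (discAut c) (ball 0 1) :=
  (differentiable_id.add_const c).differentiableOn.div
    ((differentiable_id.const_mul _).const_add 1).differentiableOn
    fun _ hw => one_add_conj_mul_ne_zero hc (mem_ball_zero_iff.1 hw)

@[simp]
lemma discAut_zero : discAut c 0 = c := by simp [discAut]

lemma hasDerivAt_discAut_zero : HasDerivAt (discAut c) (1 - c * conj c) 0 := by
  have hnum : HasDerivAt (fun w : ℂ => w + c) 1 0 := (hasDerivAt_id' 0).add_const c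
  have hden : HasDerivAt (fun w : ℂ => 1 + conj c * w) (conj c) 0 := by
    simpa using ((hasDerivAt_id' 0).const_mul (conj c)).const_add 1
  exact (hnum.div hden (by simp)).congr_deriv (by simp)

end DiscAut

section Cayley

variable {a : ℂ}

lemma add_conj_ne_zero_of_re_pos (ha : 0 < a.re) {w : ℂ} (hw : 0 < w.re) : w + conj a ≠ 0 :=
  fun h => by simpa using (add_pos hw ha).ne' (by simpa using congrArg re h)

lemma norm_cayley_lt_one (ha : 0 < a.re) {w : ℂ} (hw : 0 < w.re) : ‖cayley a w‖ < 1 := by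
  have hden := add_conj_ne_zero_of_re_pos ha hw
  rw [cayley, norm_div, div_lt_one (norm_pos_iff.2 hden)]
  apply lt_of_pow_lt_pow_left₀ 2 (norm_nonneg _)
  rw [Complex.sq_norm, Complex.sq_norm]
  simp only [normSq_apply, sub_re, sub_im, add_re, add_im, conj_re, conj_im]
  -- `|w + ā|² - |w - a|² = 4 Re w Re a`
  nlinarith [mul_pos ha hw]

lemma mapsTo_cayley (ha : 0 < a.re) : MapsTo (cayley a) {w | 0 < w.re} (ball 0 1) :=
  fun _ hw => mem_ball_zero_iff.2 (norm_cayley_lt_one ha hw)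

lemma differentiableOn_cayley (ha : 0 < a.re) : DifferentiableOn ℂ (cayley a) {w | 0 < w.re} :=
  (differentiable_id.sub_const a).differentiableOn.div
    (differentiable_id.add_const _).differentiableOn fun _ hw => add_conj_ne_zero_of_re_pos ha hw

@[simp]
lemma cayley_self : cayley a a = 0 := by simp [cayley]

lemma hasDerivAt_cayley_self (ha : 0 < a.re) : HasDerivAt (cayley a) (a + conj a)⁻¹ a := by
  have hden := add_conj_ne_zero_of_re_pos ha ha
  have := ((hasDerivAt_id' a).sub_const a).div ((hasDerivAt_id' a).add_const (conj a)) hden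
  exact this.congr_deriv (by field_simp; ring)

end Cayley

theorem norm_deriv_mul_one_sub_sq_le_two_re {p : ℂ → ℂ} (hp : DifferentiableOn ℂ p (ball 0 1))
    (hre : ∀ z ∈ ball (0 : ℂ) 1, 0 < (p z).re) {z : ℂ} (hz : z ∈ ball (0 : ℂ) 1) :
    ‖deriv p z‖ * (1 - ‖z‖ ^ 2) ≤ 2 * (p z).re := by
  have hz1 : ‖z‖ < 1 := mem_ball_zero_iff.1 hz
  have ha := hre z hz
  set H := cayley (p z) ∘ p ∘ discAut z
  have hH : DifferentiableOn ℂ H (ball 0 1) :=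
    (differentiableOn_cayley ha).comp (hp.comp (differentiableOn_discAut hz1) (mapsTo_discAut hz1))
      fun w hw => hre _ (mapsTo_discAut hz1 hw)
  have hHmaps : MapsTo H (ball 0 1) (closedBall (H 0) 1) := by
    simp only [H, Function.comp_apply, discAut_zero, cayley_self]
    exact ((mapsTo_cayley ha).comp (fun w hw => hre _ (mapsTo_discAut hz1 hw))).mono_right
      ball_subset_closedBall
  have hpz : HasDerivAt p (deriv p z) (discAut z 0) := by
    rw [discAut_zero]
    exact (hp.differentiableAt (isOpen_ball.mem_nhds hz)).hasDerivAt
  have hcay : HasDerivAt (cayley (p z)) (p z + conj (p z))⁻¹ (p (discAut z 0)) := by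
    rw [discAut_zero]
    exact hasDerivAt_cayley_self ha
  have hderiv := (hcay.comp 0 (hpz.comp 0 hasDerivAt_discAut_zero)).deriv
  have hschwarz := norm_deriv_le_one_of_mapsTo_ball hH hHmaps one_pos
  rw [hderiv, norm_mul, norm_mul, norm_inv, add_conj, mul_conj, normSq_eq_norm_sq,
    ← ofReal_one, ← ofReal_sub, norm_real, norm_real, Real.norm_of_nonneg (by positivity),
    Real.norm_of_nonneg (by nlinarith [norm_nonneg z]), inv_mul_le_iff₀ (by positivity)] at hschwarz
  linarith

end Complex

theorem Pprime_convexity_estimate_general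
    (f : ℂ → ℂ) (hf : AnalyticOn ℂ f (ball (0 : ℂ) 1))
    (hre : ∀ z ∈ ball (0 : ℂ) 1, 0 < (deriv f z).re) :
    ∀ z ∈ ball (0 : ℂ) 1,
      (1 + z * deriv (deriv f) z / deriv f z).re ≤
        1 + 2 * ‖z‖ / (1 - (‖z‖) ^ 2) := by
  intro z hz
  have hf' : DifferentiableOn ℂ (deriv f) (ball 0 1) :=
    (isOpen_ball.analyticOn_iff_analyticOnNhd.1 hf).deriv.differentiableOn
  have harnack := norm_deriv_mul_one_sub_sq_le_two_re hf' hre hz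
  have hr : 0 < 1 - ‖z‖ ^ 2 := by nlinarith [norm_nonneg z, mem_ball_zero_iff.1 hz]
  have hpz : 0 < ‖deriv f z‖ := (hre z hz).trans_le (re_le_norm _)
  calc (1 + z * deriv (deriv f) z / deriv f z).re
      ≤ 1 + ‖z‖ * ‖deriv (deriv f) z‖ / ‖deriv f z‖ := by
        rw [add_re, one_re, ← norm_mul, ← norm_div]
        gcongr
        exact re_le_norm _
    _ ≤ 1 + 2 * ‖z‖ / (1 - ‖z‖ ^ 2) := by
        gcongr 1 + ?_
        rw [div_le_div_iff₀ hpz hr]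
        nlinarith [mul_le_mul_of_nonneg_left harnack (norm_nonneg z),
          re_le_norm (deriv f z), norm_nonneg z]

/-- For `f ∈ P'` (analytic on `𝔻`, `f(0)=0`, `f'(0)=1`, `Re f' > 0`), one has
`Re(1 + z f''(z)/f'(z)) ≤ 1 + 2r/(1-r²)` where `r = |z|`. -/
theorem Pprime_convexity_estimate
    (f : ℂ → ℂ) (hf : AnalyticOn ℂ f (ball (0 : ℂ) 1))
    (hf0 : f 0 = 0) (hf'0 : deriv f 0 = 1)
    (hre : ∀ z ∈ ball (0 : ℂ) 1, 0 < (deriv f z).re) :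
    ∀ z ∈ ball (0 : ℂ) 1,
      (1 + z * deriv (deriv f) z / deriv f z).re ≤
        1 + 2 * ‖z‖ / (1 - (‖z‖) ^ 2) :=
  Pprime_convexity_estimate_general f hf hre
end

section
/- Let A ∈ (1,2], α ≥ 1, and let f be analytic and locally univalent on the open unit disc 𝔻 with f(0)=0, f'(0)=1, satisfying |−z̄ + (1/2)(1−|z|²)·f''(z)/f'(z)| ≤ α for all z ∈ 𝔻. Then Re T_f(z) > 0 for all z with |z| < (A + 1 + 2α − 2√((A+α)(1+α)))/(A−1), where T_f(z) = (2/(A−1))·[((A+1)/2)·(1+z)/(1−z) − 1 − z f''(z)/f'(z)]. -/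
/-!
With `r = ‖z‖`, multiplying the expression in the order bound by `z` gives
`-r² + (1 - r²)/2 · Re (z f''/f') ≤ r α`, while `Re ((1 + z)/(1 - z)) ≥ (1 - r)/(1 + r)`.
Together they give `(A - 1)(1 - r²) Re T_f(z) ≥ (A - 1) r² - 2 (A + 1 + 2α) r + (A - 1)`, and the
radius in the statement is the smaller root of this quadratic.
-/

open Complex Metric Set

/-- The concavity test function `T_f` associated with `Co(A)`. -/
noncomputable def Tfun (A : ℝ) (f : ℂ → ℂ) (z : ℂ) : ℂ :=
  (2 / ((A : ℂ) - 1)) * ((((A : ℂ) + 1) / 2) * (1 + z) / (1 - z) - 1 -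
    z * deriv (deriv f) z / deriv f z)

open ComplexConjugate

lemma re_one_add_div_one_sub (z : ℂ) :
    ((1 + z) / (1 - z)).re = (1 - ‖z‖ ^ 2) / ‖1 - z‖ ^ 2 := by
  rw [div_re, ← add_div, ← normSq_eq_norm_sq, ← normSq_eq_norm_sq]
  simp only [normSq_apply, add_re, one_re, sub_re, add_im, one_im, sub_im]
  ring

lemma one_sub_div_one_add_le_re_one_add_div_one_sub {z : ℂ} (hz : ‖z‖ < 1) :
    (1 - ‖z‖) / (1 + ‖z‖) ≤ ((1 + z) / (1 - z)).re := by
  have h1z : 0 < ‖1 - z‖ := norm_pos_iff.mpr (sub_ne_zero.mpr fun h ↦ by simp [← h] at hz)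
  calc (1 - ‖z‖) / (1 + ‖z‖) = (1 - ‖z‖ ^ 2) / (1 + ‖z‖) ^ 2 := by
        field_simp; ring
    _ ≤ (1 - ‖z‖ ^ 2) / ‖1 - z‖ ^ 2 := by
        gcongr
        · nlinarith [norm_nonneg z]
        · exact (norm_sub_le 1 z).trans (by simp)
    _ = ((1 + z) / (1 - z)).re := (re_one_add_div_one_sub z).symm

lemma re_mul_le_of_norm_neg_conj_add_le {z p : ℂ} {α : ℝ} (hz : ‖z‖ < 1)
    (h : ‖-conj z + (1 / 2 : ℂ) * ((1 - ‖z‖ ^ 2 : ℝ) : ℂ) * p‖ ≤ α) :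
    (z * p).re ≤ 2 * (‖z‖ * α + ‖z‖ ^ 2) / (1 - ‖z‖ ^ 2) := by
  have hmul : z * (-conj z + (1 / 2 : ℂ) * ((1 - ‖z‖ ^ 2 : ℝ) : ℂ) * p) =
      -((‖z‖ ^ 2 : ℝ) : ℂ) + (((1 - ‖z‖ ^ 2) / 2 : ℝ) : ℂ) * (z * p) := by
    rw [mul_add, mul_neg, mul_conj, normSq_eq_norm_sq]; push_cast; ring
  have hre : -‖z‖ ^ 2 + (1 - ‖z‖ ^ 2) / 2 * (z * p).re ≤ ‖z‖ * α :=
    calc -‖z‖ ^ 2 + (1 - ‖z‖ ^ 2) / 2 * (z * p).re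
        = (z * (-conj z + (1 / 2 : ℂ) * ((1 - ‖z‖ ^ 2 : ℝ) : ℂ) * p)).re := by
          rw [hmul, add_re, neg_re, ofReal_re, re_ofReal_mul]
      _ ≤ ‖z * (-conj z + (1 / 2 : ℂ) * ((1 - ‖z‖ ^ 2 : ℝ) : ℂ) * p)‖ := re_le_norm _
      _ ≤ ‖z‖ * α := by rw [norm_mul]; gcongr
  rw [le_div_iff₀ (by nlinarith [norm_nonneg z])]
  linarith

lemma re_Tfun (A : ℝ) (f : ℂ → ℂ) (z : ℂ) :
    (Tfun A f z).re = 2 / (A - 1) * ((A + 1) / 2 * ((1 + z) / (1 - z)).re - 1 -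
      (z * deriv (deriv f) z / deriv f z).re) := by
  have h2 : 2 / ((A : ℂ) - 1) = ((2 / (A - 1) : ℝ) : ℂ) := by push_cast; ring
  have hfrac : ((A : ℂ) + 1) / 2 * (1 + z) / (1 - z) =
      (((A + 1) / 2 : ℝ) : ℂ) * ((1 + z) / (1 - z)) := by
    push_cast; ring
  rw [Tfun, h2, hfrac, re_ofReal_mul, sub_re, sub_re, re_ofReal_mul, one_re]

noncomputable def concavityRadius (A α : ℝ) : ℝ :=
  (A + 1 + 2 * α - 2 * √((A + α) * (1 + α))) / (A - 1)

lemma two_sqrt_lt_of_lt_concavityRadius {A α r : ℝ} (hA : 1 < A)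
    (hr : r < concavityRadius A α) :
    2 * √((A + α) * (1 + α)) < A + 1 + 2 * α - (A - 1) * r := by
  rw [concavityRadius, lt_div_iff₀ (by linarith)] at hr
  linarith

lemma lt_one_of_lt_concavityRadius {A α r : ℝ} (hA : 1 < A) (hα : -1 < α)
    (hr : r < concavityRadius A α) : r < 1 := by
  have hsqrt : 1 + α < √((A + α) * (1 + α)) :=
    Real.lt_sqrt_of_sq_lt (by nlinarith)
  nlinarith [two_sqrt_lt_of_lt_concavityRadius hA hr]

lemma quadratic_pos_of_lt_concavityRadius {A α r : ℝ} (hA : 1 < A) (hα : -1 < α)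
    (hr : r < concavityRadius A α) :
    0 < (A - 1) * r ^ 2 - 2 * (A + 1 + 2 * α) * r + (A - 1) := by
  have hs := two_sqrt_lt_of_lt_concavityRadius hA hr
  have hs2 : √((A + α) * (1 + α)) ^ 2 = (A + α) * (1 + α) := Real.sq_sqrt (by nlinarith)
  have hs0 := Real.sqrt_nonneg ((A + α) * (1 + α))
  -- with `X = A + 1 + 2α - (A - 1) r`, `(X - 2√·)(X + 2√·)` is `A - 1` times the quadratic
  nlinarith [mul_pos (by linarith : 0 < A + 1 + 2 * α - (A - 1) * r - 2 * √((A + α) * (1 + α)))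
      (by linarith : 0 < A + 1 + 2 * α - (A - 1) * r + 2 * √((A + α) * (1 + α)))]

lemma concavity_lower_bound_pos {A α r P W : ℝ} (hA : 1 < A) (hα : -1 < α) (hr0 : 0 ≤ r)
    (hr : r < concavityRadius A α) (hP : (1 - r) / (1 + r) ≤ P)
    (hW : W ≤ 2 * (r * α + r ^ 2) / (1 - r ^ 2)) :
    0 < 2 / (A - 1) * ((A + 1) / 2 * P - 1 - W) := by
  have hr1 := lt_one_of_lt_concavityRadius hA hα hr
  have hr2 : 0 < 1 - r ^ 2 := by nlinarith
  have heq : (A + 1) / 2 * ((1 - r) / (1 + r)) - 1 - 2 * (r * α + r ^ 2) / (1 - r ^ 2) =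
      ((A - 1) * r ^ 2 - 2 * (A + 1 + 2 * α) * r + (A - 1)) / (2 * (1 - r ^ 2)) := by
    field_simp [(by linarith : 1 + r ≠ 0), hr2.ne']
    ring
  have hbound :
      0 < (A + 1) / 2 * ((1 - r) / (1 + r)) - 1 - 2 * (r * α + r ^ 2) / (1 - r ^ 2) := by
    rw [heq]
    exact div_pos (quadratic_pos_of_lt_concavityRadius hA hα hr) (by linarith)
  have hAP := mul_le_mul_of_nonneg_left hP (by linarith : 0 ≤ (A + 1) / 2)
  exact mul_pos (div_pos two_pos (by linarith)) (by linarith)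

theorem radius_of_concavity_LIF_general
    (A : ℝ) (hA : A ∈ Set.Ioc (1 : ℝ) 2) (α : ℝ) (hα : 1 ≤ α)
    (f : ℂ → ℂ)
    (hord : ∀ z ∈ ball (0 : ℂ) 1,
      ‖-(starRingEnd ℂ) z +
        (1 / 2 : ℂ) * ((1 - ‖z‖ ^ 2 : ℝ) : ℂ) *
          deriv (deriv f) z / deriv f z‖ ≤ α)
    (z : ℂ)
    (hz : ‖z‖ <
      (A + 1 + 2 * α - 2 * Real.sqrt ((A + α) * (1 + α))) / (A - 1)) :
    0 < (Tfun A f z).re := by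
  have hα' : -1 < α := by linarith
  have hr : ‖z‖ < 1 := lt_one_of_lt_concavityRadius hA.1 hα' hz
  have hW := re_mul_le_of_norm_neg_conj_add_le hr
    (by simpa only [mul_div_assoc] using hord z (mem_ball_zero_iff.mpr hr))
  rw [← mul_div_assoc] at hW
  rw [re_Tfun]
  exact concavity_lower_bound_pos hA.1 hα' (norm_nonneg z) hz
    (one_sub_div_one_add_le_re_one_add_div_one_sub hr) hW

/-- Radius of concavity for a member of a linear-invariant family of order `α`,
characterised by Pommerenke's bound
`|-z̄ + (1/2)(1-|z|²) f''(z)/f'(z)| ≤ α` on `𝔻`. -/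
theorem radius_of_concavity_LIF
    (A : ℝ) (hA : A ∈ Set.Ioc (1 : ℝ) 2) (α : ℝ) (hα : 1 ≤ α)
    (f : ℂ → ℂ) (hf : AnalyticOn ℂ f (ball (0 : ℂ) 1))
    (hf' : ∀ z ∈ ball (0 : ℂ) 1, deriv f z ≠ 0)
    (hf0 : f 0 = 0) (hf'0 : deriv f 0 = 1)
    (hord : ∀ z ∈ ball (0 : ℂ) 1,
      ‖-(starRingEnd ℂ) z +
        (1 / 2 : ℂ) * ((1 - ‖z‖ ^ 2 : ℝ) : ℂ) *
          deriv (deriv f) z / deriv f z‖ ≤ α)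
    (z : ℂ)
    (hz : ‖z‖ <
      (A + 1 + 2 * α - 2 * Real.sqrt ((A + α) * (1 + α))) / (A - 1)) :
    0 < (Tfun A f z).re :=
  radius_of_concavity_LIF_general A hA α hα f hord z hz
end
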